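/- arXiv:2208.00482 — 6 statements merged into one kernel-verified Lean document; each statement's English description precedes it below -/
import Mathlib

section
/- Let n ≥ 2 be an integer, let p_1,…,p_n ∈ (0,1), and let j ∈ {1,…,n−1} satisfy π_j ≥ π̄_j and π_{j+1} < π̄_{j+1}. Set D = π_j − π_{j+1} + π̄_{j+1} − π̄_j, V = (π̄_{j+1}π_j − π_{j+1}π̄_j)/D, q = (π̄_{j+1} − π_{j+1})/D and r = (π̄_{j+1} − π̄_j)/D. Suppose that for every i ∈ {1,…,n}, (π_i − π_j)(π̄_{j+1} − π̄_j) ≥ (π_j − π_{j+1})(π̄_j − π̄_i). Then: (i) for every expanding search σ of the cycle C_n, q·P(j,σ) + (1−q)·P(j+1,σ) ≤ V; and (ii) for every i ∈ {1,…,n}, r·π_i + (1−r)·π̄_i ≥ V. (Consequently the value of the search and rescue game on C_n with one target is V; it is optimal for the Hider to hide at j with probability q and at j+1 with probability 1−q, and for the Searcher to sweep clockwise with probability r and anticlockwise with probability 1−r.) -/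
/-!
An expanding search of `C n` has, at every moment, searched exactly the nonzero vertices of an
arc through `0`. If `j` is searched before `j + 1`, that arc contains `1, …, j` when `j` is
searched, so `P(j) ≤ π_j` and `P(j+1) ≤ p_{j+1} P(j) ≤ π_{j+1}`; otherwise symmetrically
`P(j+1) ≤ π̄_{j+1}` and `P(j) ≤ π̄_j`. The weight `q` makes the Hider's mixture worth exactly `V`
against both sweeps, so it holds every search to `V`. For the Searcher,
`(r π_i + (1 - r) π̄_i - V) D` is the difference of the two sides of the hypothesis on `i`,
and `D > 0`.
-/

/-- Adjacency in the cycle `C n` with vertex set `{0, 1, …, n}`. -/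
def CycleAdj (n : ℕ) (u v : ℕ) : Prop :=
  v = u + 1 ∨ u = v + 1 ∨ (u = 0 ∧ v = n) ∨ (u = n ∧ v = 0)

/-- An expanding search of the cycle `C n`, encoded as a permutation of `Fin n`
(position `j` searches vertex `(σ j : ℕ) + 1 ∈ {1, …, n}`). -/
def IsExpandingSearch (n : ℕ) (σ : Equiv.Perm (Fin n)) : Prop :=
  ∀ j : Fin n, CycleAdj n ((σ j : ℕ) + 1) 0 ∨
    ∃ i : Fin n, i < j ∧ CycleAdj n ((σ j : ℕ) + 1) ((σ i : ℕ) + 1)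

/-- The payoff `P(v, σ)`: the product of the success probabilities of all vertices
searched up to and including the vertex `v` (encoded as `v : Fin n`, label `v + 1`). -/
def payoff (n : ℕ) (p : ℕ → ℝ) (σ : Equiv.Perm (Fin n)) (v : Fin n) : ℝ :=
  ∏ i ∈ Finset.univ.filter (fun i : Fin n => i ≤ σ.symm v), p ((σ i : ℕ) + 1)

/-- `π j = p 1 ⋯ p j`. -/
def piProd (p : ℕ → ℝ) (j : ℕ) : ℝ := ∏ i ∈ Finset.Icc 1 j, p i

/-- `π̄ j = p j ⋯ p n`. -/
def piBar (n : ℕ) (p : ℕ → ℝ) (j : ℕ) : ℝ := ∏ i ∈ Finset.Icc j n, p i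
open Finset

lemma piProd_succ (p : ℕ → ℝ) (j : ℕ) : piProd p (j + 1) = piProd p j * p (j + 1) :=
  prod_Icc_succ_top (by omega) p

lemma piBar_eq_mul_piBar_succ (n : ℕ) (p : ℕ → ℝ) {j : ℕ} (hjn : j ≤ n) :
    piBar n p j = p j * piBar n p (j + 1) := by
  rw [piBar, piBar, Icc_eq_cons_Ioc hjn, prod_cons, Icc_add_one_left_eq_Ioc]

/-- The nonzero vertices of an arc of `C n` through `0`. -/
def IsArc (n : ℕ) (T : Finset ℕ) : Prop :=
  ∃ a c, a < c ∧ T = Icc 1 a ∪ Icc c n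

namespace IsArc

variable {n : ℕ} {T : Finset ℕ}

lemma empty (n : ℕ) : IsArc n ∅ :=
  ⟨0, n + 1, by omega, by ext x; simp⟩

lemma insert (hT : IsArc n T) {v : ℕ} (hv : v ∈ Icc 1 n) (hvT : v ∉ T)
    (hadj : CycleAdj n v 0 ∨ ∃ u ∈ T, CycleAdj n v u) : IsArc n (insert v T) := by
  obtain ⟨a, c, hac, rfl⟩ := hT
  simp only [mem_union, mem_Icc] at hv hvT
  have hend : v = a + 1 ∨ v + 1 = c ∨ (v = n ∧ n < c) := by
    rcases hadj with h | ⟨u, hu, h⟩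
    · unfold CycleAdj at h; omega
    · simp only [mem_union, mem_Icc] at hu; unfold CycleAdj at h; omega
  rcases hend with h | h
  · exact ⟨v, c, by omega, by ext x; simp only [Finset.mem_insert, mem_union, mem_Icc]; omega⟩
  · exact ⟨a, v, by omega, by ext x; simp only [Finset.mem_insert, mem_union, mem_Icc]; omega⟩

lemma Icc_one_subset (hT : IsArc n T) {j : ℕ} (hj : j ∈ T) (hj' : j + 1 ∉ T) (hjn : j < n) :
    Icc 1 j ⊆ T := by
  obtain ⟨a, c, hac, rfl⟩ := hT
  intro x hx
  simp only [mem_union, mem_Icc] at hj hj' hx ⊢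
  omega

lemma Icc_subset (hT : IsArc n T) {j : ℕ} (hj : 1 ≤ j) (hjT : j ∉ T) (hj' : j + 1 ∈ T) :
    Icc (j + 1) n ⊆ T := by
  obtain ⟨a, c, hac, rfl⟩ := hT
  intro x hx
  simp only [mem_union, mem_Icc] at hjT hj' hx ⊢
  omega

end IsArc

/-- The vertices (as labels in `{1, …, n}`) searched in the first `m` steps of `σ`. -/
def searched {n : ℕ} (σ : Equiv.Perm (Fin n)) (m : ℕ) : Finset ℕ :=
  (univ.filter fun i : Fin n => (i : ℕ) < m).image fun i => (σ i : ℕ) + 1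

section searched

variable {n : ℕ} (σ : Equiv.Perm (Fin n))

lemma mem_searched {m : ℕ} (v : Fin n) : (v : ℕ) + 1 ∈ searched σ m ↔ (σ.symm v : ℕ) < m := by
  simp only [searched, mem_image, mem_filter, mem_univ, true_and, add_left_inj,
    Fin.val_inj, ← Equiv.eq_symm_apply]
  exact ⟨fun ⟨i, hi, hiv⟩ => hiv ▸ hi, fun h => ⟨_, h, rfl⟩⟩

lemma searched_subset_Icc (m : ℕ) : searched σ m ⊆ Icc 1 n := by
  intro x hx
  obtain ⟨i, -, rfl⟩ := mem_image.mp hx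
  simp [(σ i).isLt]

lemma searched_mono {m m' : ℕ} (h : m ≤ m') : searched σ m ⊆ searched σ m' :=
  image_subset_image fun i hi => by simp only [mem_filter, mem_univ, true_and] at hi ⊢; omega

lemma searched_succ {m : ℕ} (hm : m < n) :
    searched σ (m + 1) = insert ((σ ⟨m, hm⟩ : ℕ) + 1) (searched σ m) := by
  have h : univ.filter (fun i : Fin n => (i : ℕ) < m + 1) =
      insert ⟨m, hm⟩ (univ.filter fun i : Fin n => (i : ℕ) < m) := by
    ext i
    simp only [mem_filter, mem_univ, true_and, Finset.mem_insert, Fin.ext_iff]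
    omega
  rw [searched, searched, h, image_insert]

lemma payoff_eq_prod_searched (p : ℕ → ℝ) (v : Fin n) :
    payoff n p σ v = ∏ x ∈ searched σ (σ.symm v + 1), p x := by
  rw [payoff, searched, prod_image fun i _ i' _ h => σ.injective (Fin.ext (by omega))]
  exact prod_congr (filter_congr fun i _ => by rw [Fin.le_def]; omega) fun _ _ => rfl

end searched

section expandingSearch

variable {n : ℕ} {σ : Equiv.Perm (Fin n)}

lemma IsExpandingSearch.isArc_searched (hσ : IsExpandingSearch n σ) :
    ∀ m ≤ n, IsArc n (searched σ m)
  | 0, _ => by simpa [searched] using IsArc.empty n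
  | m + 1, hm => by
    rw [searched_succ σ (by omega)]
    refine (hσ.isArc_searched m (by omega)).insert (searched_subset_Icc σ (m + 1) (by
      rw [searched_succ σ (by omega)]; exact Finset.mem_insert_self _ _)) ?_ ?_
    · rw [mem_searched]; simp
    · refine (hσ ⟨m, by omega⟩).imp_right fun ⟨i, hi, hadj⟩ => ⟨_, ?_, hadj⟩
      rw [mem_searched, Equiv.symm_apply_apply]
      exact hi

variable {p : ℕ → ℝ}

lemma payoff_le_prod_of_subset (hp : ∀ i ∈ Icc 1 n, 0 ≤ p i ∧ p i ≤ 1) {v : Fin n}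
    {s : Finset ℕ} (hs : s ⊆ searched σ (σ.symm v + 1)) : payoff n p σ v ≤ ∏ x ∈ s, p x := by
  have hsub := searched_subset_Icc σ (σ.symm v + 1)
  rw [payoff_eq_prod_searched]
  exact prod_le_prod_of_subset_of_le_one hs (fun i hi => (hp i (hsub hi)).1)
    fun i hi _ => (hp i (hsub hi)).2

lemma payoff_le_mul_payoff (hp : ∀ i ∈ Icc 1 n, 0 ≤ p i ∧ p i ≤ 1) {u v : Fin n}
    (huv : σ.symm u < σ.symm v) : payoff n p σ v ≤ p (v + 1) * payoff n p σ u := by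
  rw [Fin.lt_def] at huv
  rw [payoff_eq_prod_searched σ p u, ← prod_insert (by rw [mem_searched]; omega)]
  exact payoff_le_prod_of_subset hp
    (insert_subset ((mem_searched σ v).2 (by omega)) (searched_mono σ (by omega)))

/-- When `u` is searched, the searched arc through `0` contains `u` but not `u + 1`, hence all of
`1, …, u`. -/
lemma IsExpandingSearch.payoff_le_piProd (hp : ∀ i ∈ Icc 1 n, 0 ≤ p i ∧ p i ≤ 1)
    (hσ : IsExpandingSearch n σ) {u v : Fin n} (huv : (v : ℕ) = u + 1)
    (h : σ.symm u < σ.symm v) : payoff n p σ u ≤ piProd p (u + 1) := by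
  rw [Fin.lt_def] at h
  refine payoff_le_prod_of_subset hp ((hσ.isArc_searched _ (σ.symm u).isLt).Icc_one_subset
    ((mem_searched σ u).2 (by omega)) ?_ (by omega))
  rw [← huv, mem_searched]
  omega

lemma IsExpandingSearch.payoff_le_piBar (hp : ∀ i ∈ Icc 1 n, 0 ≤ p i ∧ p i ≤ 1)
    (hσ : IsExpandingSearch n σ) {u v : Fin n} (huv : (v : ℕ) = u + 1)
    (h : σ.symm v < σ.symm u) : payoff n p σ v ≤ piBar n p (v + 1) := by
  rw [Fin.lt_def] at h
  rw [piBar, huv]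
  refine payoff_le_prod_of_subset hp
    ((hσ.isArc_searched _ (σ.symm v).isLt).Icc_subset (by omega) ?_ ?_)
  · rw [mem_searched]; omega
  · rw [← huv, mem_searched]; omega

lemma IsExpandingSearch.payoff_le_sweep (hp : ∀ i ∈ Icc 1 n, 0 ≤ p i ∧ p i ≤ 1)
    (hσ : IsExpandingSearch n σ) {j : ℕ} (hj : 1 ≤ j) (hjn : j < n) :
    (payoff n p σ ⟨j - 1, by omega⟩ ≤ piProd p j ∧ payoff n p σ ⟨j, hjn⟩ ≤ piProd p (j + 1)) ∨
    (payoff n p σ ⟨j - 1, by omega⟩ ≤ piBar n p j ∧ payoff n p σ ⟨j, hjn⟩ ≤ piBar n p (j + 1)) := by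
  set u : Fin n := ⟨j - 1, by omega⟩
  set v : Fin n := ⟨j, hjn⟩
  have huv : (v : ℕ) = u + 1 := show j = j - 1 + 1 by omega
  have hu : (u : ℕ) + 1 = j := show j - 1 + 1 = j by omega
  have hpj : ∀ i ∈ Icc 1 n, 0 ≤ p i := fun i hi => (hp i hi).1
  rcases (σ.symm.injective.ne (Fin.ne_of_val_ne (by omega) : u ≠ v)).lt_or_gt with h | h
  · have hPu := hσ.payoff_le_piProd hp huv h
    rw [hu] at hPu
    refine .inl ⟨hPu, ?_⟩
    calc payoff n p σ v ≤ p (j + 1) * payoff n p σ u := payoff_le_mul_payoff hp h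
      _ ≤ p (j + 1) * piProd p j := by gcongr; exact hpj _ (mem_Icc.2 (by omega))
      _ = piProd p (j + 1) := by rw [piProd_succ, mul_comm]
  · have hPv := hσ.payoff_le_piBar hp huv h
    refine .inr ⟨?_, hPv⟩
    calc payoff n p σ u ≤ p j * payoff n p σ v := hu ▸ payoff_le_mul_payoff hp h
      _ ≤ p j * piBar n p (j + 1) := by gcongr; exact hpj _ (mem_Icc.2 (by omega))
      _ = piBar n p j := (piBar_eq_mul_piBar_succ n p (by omega)).symm

end expandingSearch

section mixedStrategies

variable {a b a' b' D V q r : ℝ}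

lemma mix_eq_value (hD : D = a - b + b' - a') (hD0 : D ≠ 0) (hV : V = (b' * a - b * a') / D)
    (hq : q = (b' - b) / D) : q * a + (1 - q) * b = V ∧ q * a' + (1 - q) * b' = V := by
  subst hV hq
  constructor <;> field_simp <;> rw [hD] <;> ring

lemma value_le_mix (hD : D = a - b + b' - a') (hD0 : 0 < D) (hV : V = (b' * a - b * a') / D)
    (hr : r = (b' - a') / D) {x y : ℝ} (h : (x - a) * (b' - a') ≥ (a - b) * (a' - y)) :
    r * x + (1 - r) * y ≥ V := by
  have key : (r * x + (1 - r) * y - V) * D = (x - a) * (b' - a') - (a - b) * (a' - y) := by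
    subst hV hr
    field_simp
    rw [hD]
    ring
  nlinarith

end mixedStrategies

/-- Lemma 4: if `π j ≥ π̄ j`, `π (j+1) < π̄ (j+1)`, and condition (1) holds, then
with `V, q, r` as given, the Hider mixture on `{j, j+1}` with weights `(q, 1-q)` caps
every expanding search at `V`, and the Searcher mixture of the clockwise and
anticlockwise sweeps with weights `(r, 1-r)` guarantees `V` against every vertex. -/
theorem cycle_one_target_solution (n : ℕ) (p : ℕ → ℝ)
    (hp : ∀ i ∈ Finset.Icc 1 n, 0 < p i ∧ p i < 1)
    (j : ℕ) (hj1 : 1 ≤ j) (hj2 : j ≤ n - 1)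
    (hπ1 : piBar n p j ≤ piProd p j)
    (hπ2 : piProd p (j + 1) < piBar n p (j + 1))
    (D V q r : ℝ)
    (hD : D = piProd p j - piProd p (j + 1) + piBar n p (j + 1) - piBar n p j)
    (hV : V = (piBar n p (j + 1) * piProd p j - piProd p (j + 1) * piBar n p j) / D)
    (hq : q = (piBar n p (j + 1) - piProd p (j + 1)) / D)
    (hr : r = (piBar n p (j + 1) - piBar n p j) / D)
    (hcond : ∀ i ∈ Finset.Icc 1 n,
      (piProd p i - piProd p j) * (piBar n p (j + 1) - piBar n p j) ≥
        (piProd p j - piProd p (j + 1)) * (piBar n p j - piBar n p i)) :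
    (∀ σ : Equiv.Perm (Fin n), IsExpandingSearch n σ →
      q * payoff n p σ ⟨j - 1, by omega⟩ + (1 - q) * payoff n p σ ⟨j, by omega⟩ ≤ V) ∧
    (∀ i ∈ Finset.Icc 1 n, r * piProd p i + (1 - r) * piBar n p i ≥ V) := by
  have hD0 : 0 < D := by rw [hD]; linarith
  have hq0 : 0 ≤ q := by rw [hq]; exact div_nonneg (by linarith) hD0.le
  have hq1 : q ≤ 1 := by rw [hq, div_le_one hD0, hD]; linarith
  obtain ⟨hV_sweepC, hV_sweepA⟩ := mix_eq_value hD hD0.ne' hV hq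
  refine ⟨fun σ hσ => ?_, fun i hi => value_le_mix hD hD0 hV hr (hcond i hi)⟩
  have hp' : ∀ i ∈ Icc 1 n, 0 ≤ p i ∧ p i ≤ 1 := fun i hi => ⟨(hp i hi).1.le, (hp i hi).2.le⟩
  have hq1' : 0 ≤ 1 - q := sub_nonneg.2 hq1
  rcases hσ.payoff_le_sweep hp' hj1 (by omega) with ⟨hj, hj'⟩ | ⟨hj, hj'⟩
  · rw [← hV_sweepC]; gcongr
  · rw [← hV_sweepA]; gcongr
end

section
/- Let p_1, p_2, p_3 ∈ (0,1) with p_1 ≥ p_3 and (1−p_2)² ≥ p_2(1−p_1)(1−p_3), and set V = p_1 p_2 p_3 (1 − p_2 p_3) / (p_1 p_2 (1−p_3) + p_3 (1−p_2)). Then: (i) with r = p_3(1−p_2)/(p_3(1−p_2) + p_1 p_2(1−p_3)), for every i ∈ {1,2,3}, r·π_i + (1−r)·π̄_i ≥ V, where π_1 = p_1, π_2 = p_1 p_2, π_3 = p_1 p_2 p_3, π̄_1 = p_1 p_2 p_3, π̄_2 = p_2 p_3, π̄_3 = p_3; and (ii) with w = p_3(1 − p_1 p_2)/(p_3(1 −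 p_1 p_2) + p_2(p_1 − p_3)), for every expanding search σ of the cycle C_3, w·P(2,σ) + (1−w)·P(3,σ) ≤ V. (So the value of the one-target game on C_3 in this case is V, achieved by the Hider mixing over vertices 2 and 3 with probabilities proportional to p_3(1−p_1 p_2) and p_2(p_1−p_3), and by the Searcher mixing over the clockwise and anticlockwise sweeps with probabilities proportional to p_3(1−p_2) and p_1 p_2(1−p_3).) -/
lemma mix_eq_div {a b d : ℝ} (hd : d ≠ 0) (hab : a + b = d) (x y : ℝ) :
    a / d * x + (1 - a / d) * y = (a * x + b * y) / d := by
  rw [← hab] at hd ⊢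
  field_simp
  ring

lemma div_le_mix {a b c d x y : ℝ} (hd : 0 < d) (hab : a + b = d) (h : c ≤ a * x + b * y) :
    c / d ≤ a / d * x + (1 - a / d) * y := by
  rw [mix_eq_div hd.ne' hab]
  exact div_le_div_of_nonneg_right h hd.le

lemma mix_le_div {a b c d x y : ℝ} (hd : 0 < d) (hab : a + b = d) (h : a * x + b * y ≤ c) :
    a / d * x + (1 - a / d) * y ≤ c / d := by
  rw [mix_eq_div hd.ne' hab]
  exact div_le_div_of_nonneg_right h hd.le

section
variable {p₁ p₂ p₃ : ℝ}

lemma cycle3_searcher_bound_vertex1 (h₁ : p₁ ∈ Set.Icc (0 : ℝ) 1) (h₂ : p₂ ∈ Set.Icc (0 : ℝ) 1)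
    (h₃ : p₃ ∈ Set.Icc (0 : ℝ) 1) (hcond : p₂ * (1 - p₁) * (1 - p₃) ≤ (1 - p₂) ^ 2) :
    p₁ * p₂ * p₃ * (1 - p₂ * p₃) ≤ p₃ * (1 - p₂) * p₁ + p₁ * p₂ * (1 - p₃) * (p₁ * p₂ * p₃) := by
  have hsq : p₂ ^ 2 * ((1 - p₁) * (1 - p₃)) ≤ p₂ * ((1 - p₁) * (1 - p₃)) :=
    mul_le_mul_of_nonneg_right (pow_le_of_le_one h₂.1 h₂.2 two_ne_zero)
      (mul_nonneg (sub_nonneg.2 h₁.2) (sub_nonneg.2 h₃.2))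
  have hgap : 0 ≤ p₁ * p₃ * ((1 - p₂) ^ 2 - p₂ ^ 2 * (1 - p₁) * (1 - p₃)) :=
    mul_nonneg (mul_nonneg h₁.1 h₃.1) (by linarith)
  linear_combination hgap

lemma cycle3_hider_bound_search132 (h₁ : p₁ ∈ Set.Icc (0 : ℝ) 1)
    (h₂ : p₂ ∈ Set.Icc (0 : ℝ) 1) (h₃ : p₃ ∈ Set.Icc (0 : ℝ) 1) :
    p₃ * (1 - p₁ * p₂) * (p₁ * p₃ * p₂) + p₂ * (p₁ - p₃) * (p₁ * p₃) ≤
      p₁ * p₂ * p₃ * (1 - p₂ * p₃) := by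
  have hgap : 0 ≤ p₁ * p₂ * p₃ * (1 - p₂ * p₃) * (1 - p₁) :=
    mul_nonneg (mul_nonneg (mul_nonneg (mul_nonneg h₁.1 h₂.1) h₃.1)
      (sub_nonneg.2 (mul_le_one₀ h₂.2 h₃.1 h₃.2))) (sub_nonneg.2 h₁.2)
  linear_combination hgap

lemma cycle3_hider_bound_search312 (h₁ : p₁ ∈ Set.Icc (0 : ℝ) 1)
    (h₂ : p₂ ∈ Set.Icc (0 : ℝ) 1) :
    p₃ * (1 - p₁ * p₂) * (p₃ * p₁ * p₂) + p₂ * (p₁ - p₃) * p₃ ≤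
      p₁ * p₂ * p₃ * (1 - p₂ * p₃) := by
  have hgap : 0 ≤ p₂ * p₃ ^ 2 * (1 - p₁) * (1 - p₁ * p₂) :=
    mul_nonneg (mul_nonneg (mul_nonneg h₂.1 (sq_nonneg p₃)) (sub_nonneg.2 h₁.2))
      (sub_nonneg.2 (mul_le_one₀ h₁.2 h₂.1 h₂.2))
  linear_combination hgap

end

lemma payoff_apply_eq_prod_Iic (n : ℕ) (p : ℕ → ℝ) (σ : Equiv.Perm (Fin n)) (k : Fin n) :
    payoff n p σ (σ k) = ∏ i ∈ Finset.Iic k, p ((σ i : ℕ) + 1) := by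
  simp only [payoff, Equiv.symm_apply_apply, Finset.filter_ge_eq_Iic]

section
variable (p : ℕ → ℝ) (σ : Equiv.Perm (Fin 3))

lemma payoff_three_apply_zero : payoff 3 p σ (σ 0) = p (σ 0 + 1) := by
  rw [payoff_apply_eq_prod_Iic, show Finset.Iic (0 : Fin 3) = {0} by decide,
    Finset.prod_singleton]

lemma payoff_three_apply_one : payoff 3 p σ (σ 1) = p (σ 0 + 1) * p (σ 1 + 1) := by
  rw [payoff_apply_eq_prod_Iic, show Finset.Iic (1 : Fin 3) = {0, 1} by decide,
    Finset.prod_pair (by decide)]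

lemma payoff_three_apply_two :
    payoff 3 p σ (σ 2) = p (σ 0 + 1) * p (σ 1 + 1) * p (σ 2 + 1) := by
  rw [payoff_apply_eq_prod_Iic, show Finset.Iic (2 : Fin 3) = Finset.univ by decide,
    Fin.prod_univ_three]

end

lemma IsExpandingSearch.three_cases {σ : Equiv.Perm (Fin 3)} (hσ : IsExpandingSearch 3 σ) :
    (σ 0 = 0 ∧ σ 1 = 1 ∧ σ 2 = 2) ∨ (σ 0 = 0 ∧ σ 1 = 2 ∧ σ 2 = 1) ∨
    (σ 0 = 2 ∧ σ 1 = 0 ∧ σ 2 = 1) ∨ (σ 0 = 2 ∧ σ 1 = 1 ∧ σ 2 = 0) := by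
  have h₀ : σ 0 ≠ 1 := by
    rcases hσ 0 with h | ⟨i, hi, -⟩
    · intro h₁
      simp [h₁, CycleAdj] at h
    · exact absurd hi (Fin.not_lt_zero i)
  have h₀₁ : σ 0 ≠ σ 1 := σ.injective.ne (by decide)
  have h₀₂ : σ 0 ≠ σ 2 := σ.injective.ne (by decide)
  have h₁₂ : σ 1 ≠ σ 2 := σ.injective.ne (by decide)
  revert h₀ h₀₁ h₀₂ h₁₂
  generalize σ 0 = a; generalize σ 1 = b; generalize σ 2 = c
  decide +revert

lemma IsExpandingSearch.three_payoffs (p : ℕ → ℝ) {σ : Equiv.Perm (Fin 3)}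
    (hσ : IsExpandingSearch 3 σ) :
    (payoff 3 p σ 1 = p 1 * p 2 ∧ payoff 3 p σ 2 = p 1 * p 2 * p 3) ∨
    (payoff 3 p σ 1 = p 1 * p 3 * p 2 ∧ payoff 3 p σ 2 = p 1 * p 3) ∨
    (payoff 3 p σ 1 = p 3 * p 1 * p 2 ∧ payoff 3 p σ 2 = p 3) ∨
    (payoff 3 p σ 1 = p 3 * p 2 ∧ payoff 3 p σ 2 = p 3) := by
  have e₀ := payoff_three_apply_zero p σ
  have e₁ := payoff_three_apply_one p σ
  have e₂ := payoff_three_apply_two p σ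
  rcases hσ.three_cases with ⟨h₀, h₁, h₂⟩ | ⟨h₀, h₁, h₂⟩ | ⟨h₀, h₁, h₂⟩ | ⟨h₀, h₁, h₂⟩ <;>
    simp [h₀, h₁, h₂] at e₀ e₁ e₂ <;> simp [e₀, e₁, e₂]

/-- Case 1 of the solution of the one-target game on `C 3`: if `p 1 ≥ p 3` and
`(1 - p 2)² ≥ p 2 (1 - p 1)(1 - p 3)`, then the Searcher mixture `(r, 1-r)` of the
two sweeps guarantees at least `V` against each vertex, and the Hider mixture
`(w, 1-w)` on vertices `2` and `3` caps every expanding search at `V`. -/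
theorem cycle3_case1 (p : ℕ → ℝ) (hp : ∀ i ∈ Finset.Icc 1 3, 0 < p i ∧ p i < 1)
    (hcond : (1 - p 2) ^ 2 ≥ p 2 * (1 - p 1) * (1 - p 3))
    (V r w : ℝ)
    (hV : V = p 1 * p 2 * p 3 * (1 - p 2 * p 3) /
      (p 1 * p 2 * (1 - p 3) + p 3 * (1 - p 2)))
    (hr : r = p 3 * (1 - p 2) / (p 3 * (1 - p 2) + p 1 * p 2 * (1 - p 3)))
    (hw : w = p 3 * (1 - p 1 * p 2) / (p 3 * (1 - p 1 * p 2) + p 2 * (p 1 - p 3))) :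
    (r * p 1 + (1 - r) * (p 1 * p 2 * p 3) ≥ V ∧
     r * (p 1 * p 2) + (1 - r) * (p 2 * p 3) ≥ V ∧
     r * (p 1 * p 2 * p 3) + (1 - r) * p 3 ≥ V) ∧
    (∀ σ : Equiv.Perm (Fin 3), IsExpandingSearch 3 σ →
      w * payoff 3 p σ ⟨1, by omega⟩ + (1 - w) * payoff 3 p σ ⟨2, by omega⟩ ≤ V) := by
  have i₁ := Set.Ioo_subset_Icc_self (hp 1 (by simp))
  have i₂ := Set.Ioo_subset_Icc_self (hp 2 (by simp))
  have i₃ := Set.Ioo_subset_Icc_self (hp 3 (by simp))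
  obtain ⟨h₁, -⟩ := hp 1 (by simp)
  obtain ⟨h₂, h₂'⟩ := hp 2 (by simp)
  obtain ⟨h₃, h₃'⟩ := hp 3 (by simp)
  set D := p 1 * p 2 * (1 - p 3) + p 3 * (1 - p 2)
  have hD : 0 < D :=
    add_pos (mul_pos (mul_pos h₁ h₂) (sub_pos.2 h₃')) (mul_pos h₃ (sub_pos.2 h₂'))
  have hsr : p 3 * (1 - p 2) + p 1 * p 2 * (1 - p 3) = D := add_comm _ _
  have hsw : p 3 * (1 - p 1 * p 2) + p 2 * (p 1 - p 3) = D := by ring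
  rw [hsr] at hr
  rw [hsw] at hw
  subst hV hr hw
  refine ⟨⟨div_le_mix hD hsr (cycle3_searcher_bound_vertex1 i₁ i₂ i₃ hcond),
    div_le_mix hD hsr (le_of_eq (by ring)), div_le_mix hD hsr (le_of_eq (by ring))⟩,
    fun σ hσ => ?_⟩
  show _ * payoff 3 p σ 1 + _ * payoff 3 p σ 2 ≤ _
  rcases hσ.three_payoffs p with ⟨e₂, e₃⟩ | ⟨e₂, e₃⟩ | ⟨e₂, e₃⟩ | ⟨e₂, e₃⟩ <;> rw [e₂, e₃]
  · exact mix_le_div hD hsw (le_of_eq (by ring))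
  · exact mix_le_div hD hsw (cycle3_hider_bound_search132 i₁ i₂ i₃)
  · exact mix_le_div hD hsw (cycle3_hider_bound_search312 i₁ i₂)
  · exact mix_le_div hD hsw (le_of_eq (by ring))
end

section
/- Let n ≥ 1 and p_1,…,p_n ∈ (0,1). Then for every permutation σ of {1,…,n}, Σ_{t=1}^{n} ((1 − p_{σ(t)})/p_{σ(t)}) · ∏_{l=1}^{t} p_{σ(l)} = 1 − ∏_{i=1}^{n} p_i. (This shows that the Hider strategy choosing vertex i with probability proportional to (1−p_i)/p_i equalizes the expected payoff over all search orders, and yields the value (1 − ∏_i p_i)/Σ_i (1−p_i)/p_i of the one-target search and rescue game with no graph structure.) -/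
namespace Finset

theorem sum_one_sub_mul_prod_filter_lt {ι R : Type*} [CommRing R] [LinearOrder ι]
    (s : Finset ι) (a : ι → R) :
    ∑ t ∈ s, (1 - a t) * ∏ l ∈ s with l < t, a l = 1 - ∏ i ∈ s, a i := by
  have h := prod_one_sub_ordered s (fun i => 1 - a i)
  simp only [sub_sub_cancel] at h
  rw [h, sub_sub_cancel]

theorem prod_filter_le_eq_mul_prod_filter_lt {ι M : Type*} [CommMonoid M] [LinearOrder ι]
    {s : Finset ι} {t : ι} (ht : t ∈ s) (a : ι → M) :
    ∏ l ∈ s with l ≤ t, a l = a t * ∏ l ∈ s with l < t, a l := by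
  rw [← prod_insert (by simp)]
  congr 1
  ext l
  simp only [mem_filter, mem_insert, le_iff_lt_or_eq]
  grind

theorem sum_one_sub_div_mul_prod_filter_le {ι K : Type*} [Field K] [LinearOrder ι]
    (s : Finset ι) {a : ι → K} (ha : ∀ i ∈ s, a i ≠ 0) :
    ∑ t ∈ s, (1 - a t) / a t * ∏ l ∈ s with l ≤ t, a l = 1 - ∏ i ∈ s, a i := by
  rw [← sum_one_sub_mul_prod_filter_lt]
  refine sum_congr rfl fun t ht => ?_
  rw [prod_filter_le_eq_mul_prod_filter_lt ht, ← mul_assoc, div_mul_cancel₀ _ (ha t ht)]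

end Finset

theorem hider_equalizing_one_target_general (n : ℕ)
    (p : Fin n → ℝ) (hp : ∀ i, 0 < p i ∧ p i < 1) (σ : Equiv.Perm (Fin n)) :
    ∑ t : Fin n, ((1 - p (σ t)) / p (σ t)) *
      ∏ l ∈ Finset.univ.filter (fun l : Fin n => l ≤ t), p (σ l) =
    1 - ∏ i, p i := by
  rw [Finset.sum_one_sub_div_mul_prod_filter_le Finset.univ fun i _ => (hp (σ i)).1.ne',
    Equiv.prod_comp σ p]

/-- The equalizing property of the one-target Hider strategy in the unstructured
search and rescue game: for any search order `σ` of the `n` locations (position `t`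
searches location `σ t`),
`Σ_t ((1 - p (σ t)) / p (σ t)) · Π_{l ≤ t} p (σ l) = 1 - Π_i p i`. -/
theorem hider_equalizing_one_target (n : ℕ) (hn : 1 ≤ n)
    (p : Fin n → ℝ) (hp : ∀ i, 0 < p i ∧ p i < 1) (σ : Equiv.Perm (Fin n)) :
    ∑ t : Fin n, ((1 - p (σ t)) / p (σ t)) *
      ∏ l ∈ Finset.univ.filter (fun l : Fin n => l ≤ t), p (σ l) =
    1 - ∏ i, p i :=
  hider_equalizing_one_target_general n p hp σ
end

section
/- Let n ≥ k ≥ 1 and p_1,…,p_n ∈ (0,1). For a permutation σ of {1,…,n}, define F(σ) = Σ_{A ⊆ {1,…,n}, |A| = k} (∏_{i∈A} (1−p_i)/p_i) · ∏_{l=1}^{max_{i∈A} σ⁻¹(i)} p_{σ(l)}. Then F(σ) takes the same value for every permutation σ of {1,…,n}. (This is the equalizing property underlying the optimality of the Hider strategy that hides the k targets at the set A with probability proportional to ∏_{i∈A}(1−p_i)/p_i in the search and rescue game with k targets and no graph structure.) -/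
/-- `F σ`: the expected payoff of the search order `σ` against the Hider strategy
that hides the `k` targets at the set `A` with (unnormalized) weight
`Π_{i ∈ A} (1 - p i)/p i`; the payoff against `A` is the product of the success
probabilities of all locations searched up to and including the last element of `A`. -/
noncomputable def exchangeSum (n k : ℕ) (p : Fin n → ℝ) (σ : Equiv.Perm (Fin n)) : ℝ :=
  ∑ A ∈ Finset.univ.powersetCard k,
    (∏ i ∈ A, (1 - p i) / p i) *
      ∏ l ∈ Finset.univ.filter
        (fun l : Fin n => (l : ℕ) ≤ A.sup fun i => ((σ.symm i : Fin n) : ℕ)),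
        p (σ l)

/-- The sum after reindexing by `σ`: it depends only on `q = p ∘ σ`. -/
noncomputable def searchG (n k : ℕ) (q : Fin n → ℝ) : ℝ :=
  ∑ B ∈ Finset.univ.powersetCard k,
    (∏ j ∈ B, (1 - q j)) *
      ∏ l ∈ Finset.univ.filter
        (fun l : Fin n => (l : ℕ) ≤ B.sup (fun i => (i : ℕ)) ∧ l ∉ B), q l

/-- The manifestly symmetric value: probability of at least `k` "failures". -/
noncomputable def searchH (n k : ℕ) (q : Fin n → ℝ) : ℝ :=
  ∑ S ∈ Finset.univ.filter (fun S : Finset (Fin n) => k ≤ S.card),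
    (∏ i ∈ S, (1 - q i)) * ∏ i ∈ Sᶜ, q i

lemma exchangeSum_eq_searchG (n k : ℕ) (p : Fin n → ℝ) (hp : ∀ i, p i ≠ 0)
    (σ : Equiv.Perm (Fin n)) :
    exchangeSum n k p σ = searchG n k (fun i => p (σ i)) := by
  unfold exchangeSum searchG
  refine (Finset.sum_equiv (Equiv.finsetCongr σ) ?_ ?_).symm
  · intro B
    simp [Finset.mem_powersetCard, Finset.card_map]
  · intro B hB
    simp only [Equiv.finsetCongr_apply]
    have hsup : (B.map σ.toEmbedding).sup (fun i => ((σ.symm i : Fin n) : ℕ))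
        = B.sup (fun j => (j : ℕ)) := by
      rw [Finset.sup_map]
      refine Finset.sup_congr rfl fun j _ => ?_
      simp
    simp only [hsup]
    rw [Finset.prod_map]
    simp only [Equiv.coe_toEmbedding]
    set m := B.sup (fun j => (j : ℕ)) with hm
    have hBF : (Finset.univ.filter (fun l : Fin n => (l : ℕ) ≤ m)).filter (fun l => l ∈ B) = B := by
      ext x
      simp only [Finset.mem_filter, Finset.mem_univ, true_and]
      exact ⟨fun h => h.2, fun h => ⟨Finset.le_sup h, h⟩⟩
    have hsplit : (∏ l ∈ Finset.univ.filter (fun l : Fin n => (l : ℕ) ≤ m), p (σ l))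
        = (∏ j ∈ B, p (σ j)) *
          ∏ l ∈ Finset.univ.filter (fun l : Fin n => (l : ℕ) ≤ m ∧ l ∉ B), p (σ l) := by
      rw [← Finset.prod_filter_mul_prod_filter_not
        (Finset.univ.filter (fun l : Fin n => (l : ℕ) ≤ m)) (fun l => l ∈ B), hBF,
        Finset.filter_filter]
    rw [hsplit, ← mul_assoc, ← Finset.prod_mul_distrib]
    have : ∀ j ∈ B, (1 - p (σ j)) / p (σ j) * p (σ j) = 1 - p (σ j) := fun j _ =>
      div_mul_cancel₀ _ (hp (σ j))
    rw [Finset.prod_congr rfl this]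

lemma termG_expand (n : ℕ) (q : Fin n → ℝ) (B : Finset (Fin n)) :
    (∏ j ∈ B, (1 - q j)) *
      ∏ l ∈ Finset.univ.filter
        (fun l : Fin n => (l : ℕ) ≤ B.sup (fun i => (i : ℕ)) ∧ l ∉ B), q l
    = ∑ T ∈ (Finset.univ.filter
        (fun l : Fin n => B.sup (fun i => (i : ℕ)) < (l : ℕ))).powerset,
        (∏ i ∈ B ∪ T, (1 - q i)) * ∏ i ∈ (B ∪ T)ᶜ, q i := by
  set m := B.sup (fun i => (i : ℕ)) with hm
  set U := Finset.univ.filter (fun l : Fin n => m < (l : ℕ)) with hU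
  have hone : (1 : ℝ) = ∑ T ∈ U.powerset, (∏ i ∈ T, (1 - q i)) * ∏ i ∈ U \ T, q i := by
    rw [← Finset.prod_add]
    simp
  calc (∏ j ∈ B, (1 - q j)) *
      ∏ l ∈ Finset.univ.filter (fun l : Fin n => (l : ℕ) ≤ m ∧ l ∉ B), q l
      = ((∏ j ∈ B, (1 - q j)) *
      ∏ l ∈ Finset.univ.filter (fun l : Fin n => (l : ℕ) ≤ m ∧ l ∉ B), q l) *
        ∑ T ∈ U.powerset, (∏ i ∈ T, (1 - q i)) * ∏ i ∈ U \ T, q i := by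
        rw [← hone, mul_one]
    _ = ∑ T ∈ U.powerset, (∏ i ∈ B ∪ T, (1 - q i)) * ∏ i ∈ (B ∪ T)ᶜ, q i := by
        rw [Finset.mul_sum]
        refine Finset.sum_congr rfl fun T hT => ?_
        have hTU : ∀ x ∈ T, m < (x : ℕ) := by
          intro x hx
          have := Finset.mem_powerset.mp hT hx
          rw [hU] at this
          exact (Finset.mem_filter.mp this).2
        have hBm : ∀ x ∈ B, (x : ℕ) ≤ m := fun x hx => Finset.le_sup hx
        have hdBT : Disjoint B T := by
          rw [Finset.disjoint_left]
          intro x hxB hxT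
          exact absurd (hBm x hxB) (not_le.mpr (hTU x hxT))
        have hcompl : (B ∪ T)ᶜ =
            (Finset.univ.filter (fun l : Fin n => (l : ℕ) ≤ m ∧ l ∉ B)) ∪ (U \ T) := by
          ext x
          simp only [Finset.mem_compl, Finset.mem_union, Finset.mem_sdiff,
            Finset.mem_filter, Finset.mem_univ, true_and, hU]
          constructor
          · intro hx
            push_neg at hx
            by_cases hxm : (x : ℕ) ≤ m
            · exact Or.inl ⟨hxm, hx.1⟩
            · exact Or.inr ⟨not_le.mp hxm, hx.2⟩
          · rintro (⟨hxm, hxB⟩ | ⟨hxm, hxT⟩) hmem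
            · rcases hmem with h | h
              · exact hxB h
              · exact absurd hxm (not_le.mpr (hTU x h))
            · rcases hmem with h | h
              · exact absurd (hBm x h) (not_le.mpr hxm)
              · exact hxT h
        have hdLU : Disjoint (Finset.univ.filter (fun l : Fin n => (l : ℕ) ≤ m ∧ l ∉ B)) (U \ T) := by
          rw [Finset.disjoint_left]
          intro x hx hx'
          have h1 := (Finset.mem_filter.mp hx).2.1
          have h2 := (Finset.mem_filter.mp (Finset.mem_sdiff.mp hx').1).2
          omega
        rw [hcompl, Finset.prod_union hdLU, Finset.prod_union hdBT]
        ring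

lemma exists_split (n k : ℕ) (hk : 1 ≤ k) (S : Finset (Fin n)) (hS : k ≤ S.card) :
    ∃ B T : Finset (Fin n), B.card = k ∧
      (∀ x ∈ T, B.sup (fun i => (i : ℕ)) < (x : ℕ)) ∧ B ∪ T = S := by
  induction S using Finset.strongInduction with
  | _ S ih =>
    rcases eq_or_lt_of_le hS with h | h
    · exact ⟨S, ∅, h.symm, by simp, by simp⟩
    · have hne : S.Nonempty := Finset.card_pos.mp (by omega)
      set x := S.max' hne with hxdef
      have hx : x ∈ S := S.max'_mem hne
      have hsub : S.erase x ⊂ S := Finset.erase_ssubset hx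
      have hcard : k ≤ (S.erase x).card := by rw [Finset.card_erase_of_mem hx]; omega
      obtain ⟨B, T, hB, hT, hU⟩ := ih _ hsub hcard
      have hblt : ∀ b ∈ B, (b : ℕ) < (x : ℕ) := by
        intro b hb
        have hbS : b ∈ S.erase x := hU ▸ Finset.mem_union_left T hb
        have hne' := (Finset.mem_erase.mp hbS).1
        have hle := S.le_max' b (Finset.mem_erase.mp hbS).2
        have : b < x := lt_of_le_of_ne hle hne'
        exact this
      refine ⟨B, insert x T, hB, ?_, ?_⟩
      · intro y hy
        rcases Finset.mem_insert.mp hy with rfl | hy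
        · obtain ⟨b, hb⟩ := Finset.card_pos.mp (by omega : 0 < B.card)
          rw [Finset.sup_lt_iff]
          · exact fun c hc => hblt c hc
          · exact lt_of_le_of_lt (Nat.zero_le _) (hblt b hb)
        · exact hT y hy
      · rw [Finset.union_insert, hU]
        exact Finset.insert_erase hx

lemma split_inj (n : ℕ) (B T B' T' : Finset (Fin n))
    (hT : ∀ x ∈ T, B.sup (fun i => (i : ℕ)) < (x : ℕ))
    (hT' : ∀ x ∈ T', B'.sup (fun i => (i : ℕ)) < (x : ℕ))
    (hcard : B.card = B'.card) (hBT : B ∪ T = B' ∪ T') : B = B' ∧ T = T' := by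
  have key : ∀ (C D C' D' : Finset (Fin n)),
      (∀ x ∈ D, C.sup (fun i => (i : ℕ)) < (x : ℕ)) →
      (∀ x ∈ D', C'.sup (fun i => (i : ℕ)) < (x : ℕ)) →
      C ∪ D = C' ∪ D' →
      C.sup (fun i => (i : ℕ)) ≤ C'.sup (fun i => (i : ℕ)) → C ⊆ C' := by
    intro C D C' D' hD hD' hCD hle
    intro x hx
    have hx' : x ∈ C' ∪ D' := hCD ▸ Finset.mem_union_left D hx
    rcases Finset.mem_union.mp hx' with h | h
    · exact h
    · exact absurd (le_trans (Finset.le_sup hx) hle) (not_le.mpr (hD' x h))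
  have hBB' : B = B' := by
    rcases le_total (B.sup (fun i => (i : ℕ))) (B'.sup (fun i => (i : ℕ))) with hle | hle
    · exact Finset.eq_of_subset_of_card_le (key B T B' T' hT hT' hBT hle) (le_of_eq hcard.symm)
    · exact (Finset.eq_of_subset_of_card_le (key B' T' B T hT' hT hBT.symm hle)
        (le_of_eq hcard)).symm
  refine ⟨hBB', ?_⟩
  have hdBT : Disjoint B T := by
    rw [Finset.disjoint_left]
    intro x hxB hxT
    exact absurd (Finset.le_sup hxB : (x:ℕ) ≤ _) (not_le.mpr (hT x hxT))
  have hdBT' : Disjoint B T' := by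
    rw [Finset.disjoint_left]
    intro x hxB hxT
    rw [hBB'] at hxB
    exact absurd (Finset.le_sup hxB : (x:ℕ) ≤ _) (not_le.mpr (hT' x hxT))
  have h2 := hBT
  rw [← hBB'] at h2
  calc T = (B ∪ T) \ B := (Finset.union_sdiff_cancel_left hdBT).symm
    _ = (B ∪ T') \ B := by rw [h2]
    _ = T' := Finset.union_sdiff_cancel_left hdBT'

lemma searchG_eq_searchH (n k : ℕ) (hk : 1 ≤ k) (q : Fin n → ℝ) :
    searchG n k q = searchH n k q := by
  unfold searchG searchH
  rw [Finset.sum_congr rfl (fun B _ => termG_expand n q B)]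
  have hsig : (∑ x ∈ (Finset.univ.powersetCard k).sigma (fun B : Finset (Fin n) =>
        (Finset.univ.filter (fun l : Fin n => B.sup (fun i => (i : ℕ)) < (l : ℕ))).powerset),
        (∏ i ∈ x.1 ∪ x.2, (1 - q i)) * ∏ i ∈ (x.1 ∪ x.2)ᶜ, q i)
      = ∑ B ∈ (Finset.univ : Finset (Fin n)).powersetCard k,
        ∑ T ∈ (Finset.univ.filter
          (fun l : Fin n => B.sup (fun i => (i : ℕ)) < (l : ℕ))).powerset,
          (∏ i ∈ B ∪ T, (1 - q i)) * ∏ i ∈ (B ∪ T)ᶜ, q i := Finset.sum_sigma _ _ _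
  rw [← hsig]
  refine Finset.sum_bij (fun x _ => x.1 ∪ x.2) ?_ ?_ ?_ ?_
  · rintro ⟨B, T⟩ hBT
    rw [Finset.mem_sigma] at hBT
    have hB := (Finset.mem_powersetCard.mp hBT.1).2
    simp only [Finset.mem_filter, Finset.mem_univ, true_and]
    calc k = B.card := hB.symm
      _ ≤ (B ∪ T).card := Finset.card_le_card Finset.subset_union_left
  · rintro ⟨B, T⟩ hBT ⟨B', T'⟩ hBT' h
    rw [Finset.mem_sigma] at hBT hBT'
    have hB := (Finset.mem_powersetCard.mp hBT.1).2
    have hB' := (Finset.mem_powersetCard.mp hBT'.1).2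
    have hT : ∀ x ∈ T, B.sup (fun i => (i : ℕ)) < (x : ℕ) := by
      intro x hx
      have := Finset.mem_powerset.mp hBT.2 hx
      exact (Finset.mem_filter.mp this).2
    have hT' : ∀ x ∈ T', B'.sup (fun i => (i : ℕ)) < (x : ℕ) := by
      intro x hx
      have := Finset.mem_powerset.mp hBT'.2 hx
      exact (Finset.mem_filter.mp this).2
    obtain ⟨h1, h2⟩ := split_inj n B T B' T' hT hT' (hB.trans hB'.symm) h
    exact Sigma.ext h1 (by rw [h2])
  · intro S hS
    rw [Finset.mem_filter] at hS
    obtain ⟨B, T, hB, hT, hU⟩ := exists_split n k hk S hS.2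
    refine ⟨⟨B, T⟩, ?_, hU⟩
    rw [Finset.mem_sigma]
    constructor
    · exact Finset.mem_powersetCard.mpr ⟨Finset.subset_univ _, hB⟩
    · rw [Finset.mem_powerset]
      intro x hx
      simp only [Finset.mem_filter, Finset.mem_univ, true_and]
      exact hT x hx
  · rintro ⟨B, T⟩ _
    rfl

lemma searchH_comp (n k : ℕ) (q : Fin n → ℝ) (σ : Equiv.Perm (Fin n)) :
    searchH n k (fun i => q (σ i)) = searchH n k q := by
  unfold searchH
  refine Finset.sum_equiv (Equiv.finsetCongr σ) ?_ ?_
  · intro S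
    simp [Finset.card_map]
  · intro S hS
    simp only [Equiv.finsetCongr_apply]
    have h1 : (∏ i ∈ S, (1 - q (σ i))) = ∏ a ∈ S.map σ.toEmbedding, (1 - q a) := by
      rw [Finset.prod_map]; rfl
    have hcompl : (S.map σ.toEmbedding)ᶜ = Sᶜ.map σ.toEmbedding := by
      ext a
      simp [Finset.mem_map_equiv]
    have h2 : (∏ i ∈ Sᶜ, q (σ i)) = ∏ a ∈ (S.map σ.toEmbedding)ᶜ, q a := by
      rw [hcompl, Finset.prod_map]; rfl
    rw [h1, h2]

/-- The equalizing property of the `k`-target Hider strategy in the unstructured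
search and rescue game: `F σ` takes the same value for every permutation `σ`. -/
theorem hider_equalizing_k_targets (n k : ℕ) (hk : 1 ≤ k) (hkn : k ≤ n)
    (p : Fin n → ℝ) (hp : ∀ i, 0 < p i ∧ p i < 1)
    (σ τ : Equiv.Perm (Fin n)) :
    exchangeSum n k p σ = exchangeSum n k p τ := by
  have hp0 : ∀ i, p i ≠ 0 := fun i => (hp i).1.ne'
  calc exchangeSum n k p σ
      = searchG n k (fun i => p (σ i)) := exchangeSum_eq_searchG n k p hp0 σ
    _ = searchH n k (fun i => p (σ i)) := searchG_eq_searchH n k hk _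
    _ = searchH n k p := searchH_comp n k p σ
    _ = searchH n k (fun i => p (τ i)) := (searchH_comp n k p τ).symm
    _ = searchG n k (fun i => p (τ i)) := (searchG_eq_searchH n k hk _).symm
    _ = exchangeSum n k p τ := (exchangeSum_eq_searchG n k p hp0 τ).symm
end

section
/- Let p ∈ (0,1), let k ≥ 1 be an integer, and let a ≥ 0, 0 ≤ b ≤ k be integers with n = a(k+1) + b. Then for all nonnegative integers n_0, n_1, …, n_k with n_0 + n_1 + ⋯ + n_k = n+1, Σ_{j=0}^{k} p^{n+1−n_j} ≥ (k−b)·p^{n−a+1} + (b+1)·p^{n−a}, with equality when k−b of the n_j equal a and b+1 of them equal a+1. (This is the key inequality showing that, against the uniform mixture of the k+1 adaptive sweep strategies on the cycle C_n, the Hider's best responses place the k targets with all gaps equal to a or a+1, so the value of the adaptive game with equal success probabilities p is ((k−b)/(k+1))·p^{n−a+1} + ((b+1)/(k+1))·p^{n−a}.) -/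
/-- Upper bound: `1 - p^t ≤ (1-p) t` for `0 < p < 1`. -/
lemma geom_upper (p : ℝ) (hp0 : 0 < p) (hp1 : p < 1) (t : ℕ) :
    1 - p ^ t ≤ (1 - p) * t := by
  induction t with
  | zero => simp
  | succ t ih =>
    have hpt : p ^ t ≤ 1 := pow_le_one₀ hp0.le hp1.le
    have : 1 - p ^ (t + 1) = (1 - p ^ t) + p ^ t * (1 - p) := by ring
    rw [this]
    push_cast
    nlinarith [pow_nonneg hp0.le t]

/-- Lower bound: `(1-p) t p^(t-1) ≤ 1 - p^t` for `0 < p < 1`. -/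
lemma geom_lower (p : ℝ) (hp0 : 0 < p) (hp1 : p < 1) (t : ℕ) :
    (1 - p) * t * p ^ (t - 1) ≤ 1 - p ^ t := by
  induction t with
  | zero => simp
  | succ t ih =>
    have hstep : p ^ t ≤ p ^ (t - 1) := pow_le_pow_of_le_one hp0.le hp1.le (by omega)
    have h1 : (1 - p) * (t + 1 : ℕ) * p ^ ((t + 1) - 1)
        = (1 - p) * t * p ^ t + (1 - p) * p ^ t := by
      rw [Nat.add_sub_cancel]
      push_cast
      ring
    rw [h1]
    have h2 : (1 - p) * t * p ^ t ≤ (1 - p) * t * p ^ (t - 1) := by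
      have : (0:ℝ) ≤ (1 - p) * t := by
        have h1p : (0:ℝ) ≤ 1 - p := by linarith
        positivity
      nlinarith
    have h3 : 1 - p ^ (t + 1) = (1 - p ^ t) + p ^ t * (1 - p) := by ring
    nlinarith

/-- Tangent line bound for the convex sequence `m ↦ p^(n+1-m)` at `m = a`. -/
lemma tangent_bound (p : ℝ) (hp0 : 0 < p) (hp1 : p < 1) (n a : ℕ) (ha : a ≤ n)
    (m : ℕ) (hmn : m ≤ n + 1) :
    p ^ (n + 1 - a) + p ^ (n - a) * (1 - p) * ((m : ℝ) - a) ≤ p ^ (n + 1 - m) := by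
  rcases le_or_gt m a with h | h
  · -- m ≤ a, set t = a - m
    set t := a - m with ht
    have hma : (m : ℝ) - a = -(t : ℝ) := by
      have h' : a = m + t := by omega
      have h'' := congrArg (Nat.cast : ℕ → ℝ) h'
      push_cast at h''
      linarith
    have hexp : n + 1 - m = (n + 1 - a) + t := by omega
    rw [hma, hexp, pow_add]
    have hub := geom_upper p hp0 hp1 t
    have h1 : p ^ (n + 1 - a) = p * p ^ (n - a) := by
      rw [← pow_succ']
      congr 1
      omega
    have hpa : (0:ℝ) < p ^ (n - a) := pow_pos hp0 _
    have hpa1 : (0:ℝ) < p ^ (n + 1 - a) := pow_pos hp0 _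
    -- goal: p^(n+1-a) - p^(n-a)(1-p)t ≤ p^(n+1-a) * p^t
    -- i.e. p^(n+1-a)(1 - p^t) ≤ p^(n-a)(1-p)t
    have h2 : p ^ (n + 1 - a) * (1 - p ^ t) ≤ p ^ (n - a) * ((1 - p) * t) := by
      calc p ^ (n + 1 - a) * (1 - p ^ t) ≤ p ^ (n - a) * (1 - p ^ t) := by
            have hle : p ^ (n + 1 - a) ≤ p ^ (n - a) :=
              pow_le_pow_of_le_one hp0.le hp1.le (by omega)
            have : 0 ≤ 1 - p ^ t := by
              have : p ^ t ≤ 1 := pow_le_one₀ hp0.le hp1.le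
              linarith
            nlinarith
        _ ≤ p ^ (n - a) * ((1 - p) * t) := by nlinarith
    nlinarith
  · -- a < m, set t = m - a ≥ 1
    set t := m - a with ht
    have ht1 : 1 ≤ t := by omega
    have hma : (m : ℝ) - a = (t : ℝ) := by
      have h' : m = a + t := by omega
      have h'' := congrArg (Nat.cast : ℕ → ℝ) h'
      push_cast at h''
      linarith
    have hexp : n + 1 - a = (n + 1 - m) + t := by omega
    rw [hma]
    have hlb := geom_lower p hp0 hp1 t
    have hpm : (0:ℝ) < p ^ (n + 1 - m) := pow_pos hp0 _
    -- p^(n+1-m) - p^(n+1-a) = p^(n+1-m)(1 - p^t) ≥ p^(n+1-m) (1-p) t p^(t-1)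
    --                       = (1-p) t p^(n-a)
    have h1 : p ^ (n + 1 - a) = p ^ (n + 1 - m) * p ^ t := by
      rw [hexp, pow_add]
    have h2 : p ^ (n + 1 - m) * p ^ (t - 1) = p ^ (n - a) := by
      rw [← pow_add]
      congr 1
      omega
    have h3 : p ^ (n + 1 - m) * ((1 - p) * t * p ^ (t - 1)) ≤
        p ^ (n + 1 - m) * (1 - p ^ t) := by nlinarith
    calc p ^ (n + 1 - a) + p ^ (n - a) * (1 - p) * (t : ℝ)
        = p ^ (n + 1 - m) * p ^ t + p ^ (n + 1 - m) * ((1 - p) * t * p ^ (t - 1)) := by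
          rw [h1, ← h2]; ring
      _ ≤ p ^ (n + 1 - m) * p ^ t + p ^ (n + 1 - m) * (1 - p ^ t) := by linarith
      _ = p ^ (n + 1 - m) := by ring

/-- The key inequality for the adaptive game on the cycle with equal success
probabilities: if `n = a(k+1) + b` with `0 ≤ b ≤ k`, then for nonnegative integer
gaps `m 0, …, m k` summing to `n + 1`,
`Σ_j p^(n+1-m j) ≥ (k-b)·p^(n-a+1) + (b+1)·p^(n-a)`, with equality when `k - b` of
the gaps equal `a` and `b + 1` of them equal `a + 1`. -/
theorem adaptive_cycle_key_inequality (p : ℝ) (hp0 : 0 < p) (hp1 : p < 1)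
    (k : ℕ) (hk : 1 ≤ k) (a b n : ℕ) (hb : b ≤ k) (hn : n = a * (k + 1) + b)
    (m : Fin (k + 1) → ℕ) (hm : ∑ j, m j = n + 1) :
    (∑ j, p ^ (n + 1 - m j) ≥
      (k - b : ℕ) * p ^ (n - a + 1) + (b + 1 : ℕ) * p ^ (n - a)) ∧
    (((Finset.univ.filter fun j => m j = a).card = k - b ∧
        (Finset.univ.filter fun j => m j = a + 1).card = b + 1) →
      ∑ j, p ^ (n + 1 - m j) =
        (k - b : ℕ) * p ^ (n - a + 1) + (b + 1 : ℕ) * p ^ (n - a)) := by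
  have hak : a ≤ a * (k + 1) := Nat.le_mul_of_pos_right a (by omega)
  have ha : a ≤ n := by omega
  have hexp1 : n - a + 1 = n + 1 - a := by omega
  constructor
  · -- inequality
    have hmle : ∀ j, m j ≤ n + 1 := by
      intro j
      rw [← hm]
      exact Finset.single_le_sum (fun i _ => Nat.zero_le _) (Finset.mem_univ j)
    have hpt : ∀ j : Fin (k + 1),
        p ^ (n + 1 - a) + p ^ (n - a) * (1 - p) * ((m j : ℝ) - a) ≤ p ^ (n + 1 - m j) :=
      fun j => tangent_bound p hp0 hp1 n a ha (m j) (hmle j)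
    have hsum := Finset.sum_le_sum (fun j (_ : j ∈ Finset.univ) => hpt j)
    have hmsum : ∑ j : Fin (k + 1), ((m j : ℝ)) = (n : ℝ) + 1 := by
      rw [← Nat.cast_sum]
      exact_mod_cast congrArg (Nat.cast : ℕ → ℝ) hm
    have hlhs : ∑ j : Fin (k + 1),
        (p ^ (n + 1 - a) + p ^ (n - a) * (1 - p) * ((m j : ℝ) - a))
        = (k + 1 : ℝ) * p ^ (n + 1 - a)
          + p ^ (n - a) * (1 - p) * (((n : ℝ) + 1) - (k + 1) * a) := by
      rw [Finset.sum_add_distrib, Finset.sum_const, Finset.card_univ, Fintype.card_fin,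
        ← Finset.mul_sum, Finset.sum_sub_distrib, hmsum, Finset.sum_const,
        Finset.card_univ, Fintype.card_fin]
      ring
    have hnb : ((n : ℝ) + 1) - (k + 1) * a = (b : ℝ) + 1 := by
      have : (n : ℝ) = a * (k + 1) + b := by exact_mod_cast congrArg (Nat.cast : ℕ → ℝ) hn
      rw [this]; ring
    have hcast : ((k - b : ℕ) : ℝ) = (k : ℝ) - b := by
      push_cast [Nat.cast_sub hb]; ring
    have hrw : p ^ (n + 1 - a) = p ^ (n - a) * p := by
      rw [← pow_succ]
      congr 1
      omega
    rw [hlhs, hnb] at hsum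
    rw [ge_iff_le, hcast, hexp1]
    push_cast
    calc ((k : ℝ) - b) * p ^ (n + 1 - a) + ((b : ℝ) + 1) * p ^ (n - a)
        = (k + 1 : ℝ) * p ^ (n + 1 - a) + p ^ (n - a) * (1 - p) * ((b : ℝ) + 1) := by
          rw [hrw]; ring
      _ ≤ ∑ j, p ^ (n + 1 - m j) := hsum
  · -- equality case
    rintro ⟨hS, hT⟩
    classical
    set S := Finset.univ.filter fun j => m j = a with hSdef
    set T := Finset.univ.filter fun j => m j = a + 1 with hTdef
    have hdisj : Disjoint S T := by
      rw [Finset.disjoint_left]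
      intro x hxS hxT
      simp only [hSdef, hTdef, Finset.mem_filter] at hxS hxT
      omega
    have hunion : S ∪ T = Finset.univ := by
      apply Finset.eq_univ_of_card
      rw [Finset.card_union_of_disjoint hdisj, hS, hT, Fintype.card_fin]
      omega
    have : ∑ j, p ^ (n + 1 - m j) = ∑ j ∈ S, p ^ (n + 1 - m j) + ∑ j ∈ T, p ^ (n + 1 - m j) := by
      rw [← Finset.sum_union hdisj, hunion]
    rw [this]
    have hSsum : ∑ j ∈ S, p ^ (n + 1 - m j) = (k - b : ℕ) * p ^ (n - a + 1) := by
      rw [Finset.sum_congr rfl (fun j hj => by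
        simp only [hSdef, Finset.mem_filter] at hj
        rw [hj.2, show n + 1 - a = n - a + 1 from by omega])]
      rw [Finset.sum_const, hS, nsmul_eq_mul]
    have hTsum : ∑ j ∈ T, p ^ (n + 1 - m j) = (b + 1 : ℕ) * p ^ (n - a) := by
      rw [Finset.sum_congr rfl (fun j hj => by
        simp only [hTdef, Finset.mem_filter] at hj
        rw [hj.2, show n + 1 - (a + 1) = n - a from by omega])]
      rw [Finset.sum_const, hT, nsmul_eq_mul]
    rw [hSsum, hTsum]
end

section
/- For every integer k ≥ 1 and every real p ∈ (0,1), p^{1−1/(2k)} ≤ k(p − p^{1−1/k})/log p. (That is, the lower bound on the value of the continuous non-adaptive search and rescue game with k targets given by the Searcher strategy s* never exceeds the upper bound given by the Hider strategy h*.) -/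
/-!
Write `p = exp a` and `p ^ (1 - 1/k) = exp b` with `a = log p < b`. Then `p ^ (1 - 1/(2k))` is the
geometric mean `exp ((a + b) / 2)` of the two, while `k (p - p ^ (1 - 1/k)) / log p` is their
logarithmic mean `(exp b - exp a) / (b - a)`, and the geometric mean never exceeds the logarithmic
one because `sinh h ≥ h` for `h ≥ 0`.
-/

open Real

theorem Real.exp_add_div_two_mul_sub_le {a b : ℝ} (hab : a ≤ b) :
    exp ((a + b) / 2) * (b - a) ≤ exp b - exp a := by
  have hsinh : (b - a) / 2 ≤ sinh ((b - a) / 2) := self_le_sinh_iff.mpr (by linarith)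
  set m := (a + b) / 2
  set h := (b - a) / 2
  have hb : exp b = exp m * exp h := by rw [← exp_add]; congr 1; ring
  have ha : exp a = exp m * exp (-h) := by rw [← exp_add]; congr 1; ring
  rw [sinh_eq] at hsinh
  rw [hb, ha, show b - a = 2 * h by ring]
  nlinarith [exp_pos m]

/-- The lower bound never exceeds the upper bound in Proposition 11:
`p^(1 - 1/(2k)) ≤ k (p - p^(1 - 1/k)) / log p` for `p ∈ (0,1)`. -/
theorem lower_le_upper (k : ℕ) (hk : 1 ≤ k) (p : ℝ) (hp0 : 0 < p) (hp1 : p < 1) :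
    p ^ (1 - 1 / (2 * (k : ℝ))) ≤
      (k : ℝ) * (p - p ^ (1 - 1 / (k : ℝ))) / Real.log p := by
  have hk_pos : (0 : ℝ) < k := by exact_mod_cast hk
  have hlog : log p < 0 := log_neg hp0 hp1
  have hab : log p ≤ log p * (1 - 1 / k) := by
    linarith [show log p * (1 / k) < 0 from mul_neg_of_neg_of_pos hlog (by positivity)]
  have hmean := exp_add_div_two_mul_sub_le hab
  have hmid : (log p + log p * (1 - 1 / k)) / 2 = log p * (1 - 1 / (2 * k)) := by ring
  have hgap : (k : ℝ) * (log p * (1 - 1 / k) - log p) = -log p := by field_simp; ring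
  have hscaled := mul_le_mul_of_nonneg_left hmean hk_pos.le
  rw [mul_left_comm, hgap, hmid, exp_log hp0] at hscaled
  rw [le_div_iff_of_neg hlog, rpow_def_of_pos hp0, rpow_def_of_pos hp0]
  linarith
end
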